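/- Suppose M ≥ 3, ω > 0, and 0 ≤ c ≤ ω²/(2(M−2)). Then with ω_r = √(ω² + 4c·sin²(πr/M)) and β_k = −ω_k + (1/(M−1))·Σ_{j=1}^{M} ω_j, we have β_k ≥ 0 for all 1 ≤ k ≤ M. -/

import Mathlib

/-!
Every `ω_r` is at least `ω`, so `Σ_j ω_j ≥ ω_k + (M - 1) ω`. Weak coupling makes
`(M - 2)² (ω² + 4c) ≤ (M - 2)² ω² + 2 (M - 2) ω² ≤ (M - 1)² ω²`, i.e. `(M - 2) ω_k ≤ (M - 1) ω`,
and together these give `(M - 1) ω_k ≤ Σ_j ω_j`.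
-/

open Real Finset

lemma card_sub_one_mul_le_sum {ι : Type*} [DecidableEq ι] {s : Finset ι} {x : ι → ℝ} {a : ℝ}
    {k : ι} (hk : k ∈ s) (ha : ∀ j ∈ s, a ≤ x j) (hxk : (#s - 2 : ℝ) * x k ≤ (#s - 1) * a) :
    (#s - 1 : ℝ) * x k ≤ ∑ j ∈ s, x j := by
  have hcard : (#(s.erase k) : ℝ) = #s - 1 := by
    rw [card_erase_of_mem hk, Nat.cast_pred (card_pos.mpr ⟨k, hk⟩)]
  have hrest : (#s - 1 : ℝ) * a ≤ ∑ j ∈ s.erase k, x j := by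
    simpa only [nsmul_eq_mul, hcard] using
      card_nsmul_le_sum (s.erase k) x a fun j hj => ha j (mem_of_mem_erase hj)
  rw [← add_sum_erase s x hk]
  linarith

lemma le_sqrt_sq_add {ω t : ℝ} (hω : 0 ≤ ω) (ht : 0 ≤ t) : ω ≤ √(ω ^ 2 + t) :=
  (le_sqrt hω (by positivity)).mpr (le_add_of_nonneg_right ht)

lemma sub_two_mul_sqrt_le {n ω c s : ℝ} (hn : 2 ≤ n) (hω : 0 ≤ ω) (hc0 : 0 ≤ c)
    (hc : 2 * (n - 2) * c ≤ ω ^ 2) (hs0 : 0 ≤ s) (hs1 : s ≤ 1) :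
    (n - 2) * √(ω ^ 2 + 4 * c * s) ≤ (n - 1) * ω := by
  have hX : 0 ≤ ω ^ 2 + 4 * c * s := by positivity
  rw [← pow_le_pow_iff_left₀ (by positivity) (by nlinarith) two_ne_zero, mul_pow, sq_sqrt hX]
  have hcs : c * s ≤ c := mul_le_of_le_one_right hc0 hs1
  -- `(n - 1)² = (n - 2)² + 2 (n - 2) + 1`, and the middle term absorbs the coupling.
  nlinarith [mul_le_mul_of_nonneg_left hcs (by nlinarith : (0 : ℝ) ≤ 4 * (n - 2) ^ 2)]

theorem beta_nonneg_of_weak_coupling (M : ℕ) (hM : 3 ≤ M) (ω c : ℝ)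
    (hω : 0 < ω) (hc0 : 0 ≤ c) (hc : c ≤ ω ^ 2 / (2 * (M - 2 : ℝ)))
    (Ω β : ℕ → ℝ)
    (hΩ : ∀ r, Ω r = Real.sqrt (ω ^ 2 + 4 * c * Real.sin (π * r / M) ^ 2))
    (hβ : ∀ k, β k = -Ω k + (1 / (M - 1 : ℝ)) * ∑ j ∈ Finset.Icc 1 M, Ω j)
    (k : ℕ) (hk1 : 1 ≤ k) (hk2 : k ≤ M) :
    0 ≤ β k := by
  have hM3 : (3 : ℝ) ≤ M := by exact_mod_cast hM
  have hcard : (#(Icc 1 M) : ℝ) = M := by rw [Nat.card_Icc, Nat.add_sub_cancel]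
  have hc' : 2 * (M - 2 : ℝ) * c ≤ ω ^ 2 := by
    rw [le_div_iff₀ (by linarith)] at hc
    linarith
  have hΩ_ge : ∀ j ∈ Icc 1 M, ω ≤ Ω j := fun j _ =>
    hΩ j ▸ le_sqrt_sq_add hω.le (by positivity)
  have hΩk : (M - 2 : ℝ) * Ω k ≤ (M - 1) * ω :=
    hΩ k ▸ sub_two_mul_sqrt_le (by linarith) hω.le hc0 hc' (sq_nonneg _) (sin_sq_le_one _)
  have hsum := card_sub_one_mul_le_sum (mem_Icc.mpr ⟨hk1, hk2⟩) hΩ_ge (by rwa [hcard])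
  rw [hcard] at hsum
  rw [hβ, one_div_mul_eq_div, neg_add_eq_sub, sub_nonneg, le_div_iff₀ (by linarith)]
  linarith
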